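/- Let Ω be a finite set, let P, Q ⊆ ℝ^Ω be closed convex sets of probability distributions, let (p*, q*) minimize D(p‖q) over P × Q with 0 < D(p*‖q*) < ∞, and for ε > 0 and n ∈ ℕ define A_{n,ε} = { x ∈ Ω^n : log Π_{i=1}^n (p*(x_i)/q*(x_i)) ≥ n(D(p*‖q*) − ε) }. Then for every adaptive Q-strategy q̂, q̂(A_{n,ε}) ≤ exp(−n(D(p*‖q*) − ε)). -/

import Mathlib

/-! Since `q*` minimizes `D(p*‖·)` over the convex set `Q`, differentiating along the segment
from `q*` towards any `q ∈ Q` shows that the likelihood ratio `p*/q*` has mean at most `1` under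
every `q ∈ Q`. Hence, under any adaptive `Q`-strategy, the running product
`∏ᵢ p*(xᵢ)/q*(xᵢ)` has expectation at most `1` (condition on the first sample and induct),
and Markov's inequality at level `exp (n (D(p*‖q*) - ε))` bounds the mass of `A_{n,ε}`. -/

open Filter Finset

noncomputable section

variable {Ω : Type*}

/-- `p` is a probability distribution on the finite set `Ω`. -/
def IsProbDist [Fintype Ω] (p : Ω → ℝ) : Prop :=
  (∀ x, 0 ≤ p x) ∧ ∑ x, p x = 1

/-- Relative entropy `D(p‖q)`, valued in `EReal`, equal to `⊤` when `p` is not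
absolutely continuous with respect to `q`. -/
def relEnt [Fintype Ω] (p q : Ω → ℝ) : EReal :=
  if ∀ x, q x = 0 → p x = 0
  then ((∑ x, p x * Real.log (p x / q x) : ℝ) : EReal)
  else ⊤

/-- An adaptive strategy: in round `k` (0-indexed), having observed the previous
`k` samples, it outputs a distribution on `Ω` for the next sample. -/
def Strategy (Ω : Type*) : Type _ := (k : ℕ) → (Fin k → Ω) → (Ω → ℝ)

/-- A strategy is a valid adaptive `P`-strategy if every distribution it plays lies in `P`. -/
def Strategy.Valid (P : Set (Ω → ℝ)) (σ : Strategy Ω) : Prop :=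
  ∀ k (h : Fin k → Ω), σ k h ∈ P

/-- The probability assigned by an adaptive strategy to the sample sequence `x ∈ Ω^n`. -/
def Strategy.prob (σ : Strategy Ω) {n : ℕ} (x : Fin n → Ω) : ℝ :=
  ∏ k : Fin n, σ k.1 (fun i : Fin k.1 => x ⟨i.1, i.2.trans k.2⟩) (x k)

/-- The probability assigned by an adaptive strategy to a set `A ⊆ Ω^n`. -/
def Strategy.setProb (σ : Strategy Ω) {n : ℕ} (A : Finset (Fin n → Ω)) : ℝ :=
  ∑ x ∈ A, σ.prob x

open Classical in
/-- The acceptance region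
`A_{n,ε} = { x ∈ Ω^n : log ∏_i p*(x_i)/q*(x_i) ≥ n (D(p*‖q*) − ε) }`,
where `D(p*‖q*) = ∑_x p*(x) log(p*(x)/q*(x))`. -/
def acceptRegion [Fintype Ω] (pstar qstar : Ω → ℝ) (n : ℕ) (ε : ℝ) :
    Finset (Fin n → Ω) :=
  Finset.univ.filter fun x : Fin n → Ω =>
    (n : ℝ) * ((∑ y, pstar y * Real.log (pstar y / qstar y)) - ε)
      ≤ Real.log (∏ i, pstar (x i) / qstar (x i))

lemma relEnt_ne_top_iff [Fintype Ω] {p q : Ω → ℝ} :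
    relEnt p q ≠ ⊤ ↔ ∀ x, q x = 0 → p x = 0 := by
  unfold relEnt
  split_ifs with h <;> simpa using h

lemma relEnt_eq_sub_of_pos [Fintype Ω] {p u : Ω → ℝ} (hu : ∀ y, p y ≠ 0 → 0 < u y) :
    relEnt p u = ((∑ y, p y * Real.log (p y) - ∑ y, p y * Real.log (u y) : ℝ) : EReal) := by
  rw [relEnt, if_pos fun y hy => by_contra fun hp => (hu y hp).ne' hy, ← Finset.sum_sub_distrib]
  congr 1
  refine Finset.sum_congr rfl fun y _ => ?_
  by_cases hy : p y = 0
  · simp [hy]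
  · rw [Real.log_div hy (hu y hy).ne']
    ring

lemma hasDerivAt_sum_mul_log_segment [Fintype Ω] {p q₀ q : Ω → ℝ}
    (hq₀ : ∀ y, p y ≠ 0 → 0 < q₀ y) :
    HasDerivAt (fun t => ∑ y, p y * Real.log ((1 - t) * q₀ y + t * q y))
      (∑ y, p y * (q y / q₀ y) - ∑ y, p y) 0 := by
  rw [← Finset.sum_sub_distrib]
  refine HasDerivAt.fun_sum fun y _ => ?_
  by_cases hy : p y = 0
  · simpa [hy] using hasDerivAt_const (0 : ℝ) (0 : ℝ)
  · have hq₀y := (hq₀ y hy).ne'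
    have hline : HasDerivAt (fun t : ℝ => (1 - t) * q₀ y + t * q y) (q y - q₀ y) 0 :=
      ((((hasDerivAt_id' (0 : ℝ)).const_sub 1).mul_const (q₀ y)).fun_add
        ((hasDerivAt_id' (0 : ℝ)).mul_const (q y))).congr_deriv (by ring)
    refine ((hline.log (by simpa using hq₀y)).const_mul (p y)).congr_deriv ?_
    simp only [sub_zero, one_mul, zero_mul, add_zero]
    field_simp

/-- First-order optimality condition for a reverse `I`-projection `q₀` of `p` onto `Q`. -/
theorem sum_mul_div_le_one_of_isMinOn_relEnt [Fintype Ω] {Q : Set (Ω → ℝ)}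
    (hQ : ∀ q ∈ Q, 0 ≤ q) (hQconv : Convex ℝ Q) {p q₀ : Ω → ℝ} (hp : ∑ y, p y = 1)
    (hq₀ : q₀ ∈ Q) (hac : ∀ y, q₀ y = 0 → p y = 0) (hmin : IsMinOn (relEnt p) Q q₀)
    {q : Ω → ℝ} (hq : q ∈ Q) :
    ∑ y, q y * (p y / q₀ y) ≤ 1 := by
  have hq₀pos : ∀ y, p y ≠ 0 → 0 < q₀ y := fun y hy =>
    (hQ q₀ hq₀ y).lt_of_ne fun h => hy (hac y h.symm)
  set g : ℝ → ℝ := fun t => ∑ y, p y * Real.log ((1 - t) * q₀ y + t * q y)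
  -- `Ico`, not `Icc`: at `t = 1` the mixture is `q`, which need not dominate `p`.
  have hmax : IsMaxOn g (Set.Ico 0 1) 0 := by
    rintro t ⟨ht0, ht1⟩
    have hmem : (1 - t) • q₀ + t • q ∈ Q := hQconv hq₀ hq (by linarith) ht0 (by ring)
    have hpos : ∀ y, p y ≠ 0 → 0 < ((1 - t) • q₀ + t • q) y := fun y hy => by
      simp only [Pi.add_apply, Pi.smul_apply, smul_eq_mul]
      exact add_pos_of_pos_of_nonneg (mul_pos (sub_pos.2 ht1) (hq₀pos y hy))
        (mul_nonneg ht0 (hQ q hq y))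
    have h := isMinOn_iff.1 hmin _ hmem
    rw [relEnt_eq_sub_of_pos hq₀pos, relEnt_eq_sub_of_pos hpos, EReal.coe_le_coe_iff] at h
    simp only [Pi.add_apply, Pi.smul_apply, smul_eq_mul] at h
    simp only [Set.mem_ofPred_eq, g, sub_zero, one_mul, zero_mul, add_zero]
    linarith
  have hderiv := hasDerivAt_sum_mul_log_segment (q := q) hq₀pos
  rw [hp] at hderiv
  have hcone : (1 / 2 : ℝ) ∈ posTangentConeAt (Set.Ico 0 1) 0 := by
    refine mem_posTangentConeAt_of_segment_subset ?_
    rw [zero_add, segment_eq_Icc (by norm_num)]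
    exact Set.Icc_subset_Ico_right (by norm_num)
  have hfermat := hmax.localize.hasFDerivWithinAt_nonpos
    hderiv.hasFDerivAt.hasFDerivWithinAt hcone
  rw [ContinuousLinearMap.toSpanSingleton_apply, smul_eq_mul] at hfermat
  have hswap : ∑ y, q y * (p y / q₀ y) = ∑ y, p y * (q y / q₀ y) :=
    Finset.sum_congr rfl fun y _ => by ring
  linarith

namespace Strategy

def tail (σ : Strategy Ω) (a : Ω) : Strategy Ω :=
  fun k h => σ (k + 1) (Fin.cons a h)

lemma Valid.tail {Q : Set (Ω → ℝ)} {σ : Strategy Ω} (hσ : σ.Valid Q) (a : Ω) :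
    (σ.tail a).Valid Q :=
  fun k _ => hσ (k + 1) _

lemma prob_cons (σ : Strategy Ω) {n : ℕ} (a : Ω) (x : Fin n → Ω) :
    σ.prob (Fin.cons a x) = σ 0 ![] a * (σ.tail a).prob x := by
  rw [prob, Fin.prod_univ_succ]
  congr 1
  · congr 1
    exact funext fun i => i.elim0
  · refine Finset.prod_congr rfl fun k _ => ?_
    have hpast : (fun i : Fin (k.succ : ℕ) => (Fin.cons a x : Fin (n + 1) → Ω)
        ⟨i, i.2.trans k.succ.2⟩) = Fin.cons a fun i : Fin k => x ⟨i, i.2.trans k.2⟩ :=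
      funext fun i => Fin.cases rfl (fun _ => rfl) i
    rw [Fin.cons_succ, hpast]
    rfl

lemma prob_nonneg {Q : Set (Ω → ℝ)} (hQ : ∀ q ∈ Q, 0 ≤ q) {σ : Strategy Ω} (hσ : σ.Valid Q)
    {n : ℕ} (x : Fin n → Ω) : 0 ≤ σ.prob x :=
  Finset.prod_nonneg fun k _ => hQ _ (hσ k _) _

theorem sum_prob_mul_prod_le_one [Fintype Ω] {Q : Set (Ω → ℝ)} (hQ : ∀ q ∈ Q, 0 ≤ q)
    {r : Ω → ℝ} (hr : 0 ≤ r) (hbd : ∀ q ∈ Q, ∑ y, q y * r y ≤ 1) :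
    ∀ (n : ℕ) {σ : Strategy Ω}, σ.Valid Q → ∑ x : Fin n → Ω, σ.prob x * ∏ i, r (x i) ≤ 1
  | 0, σ, _ => by simp [prob]
  | n + 1, σ, hσ => by
    have hfirst : ∀ a, ∑ x : Fin n → Ω, σ.prob (Fin.cons a x : Fin (n + 1) → Ω) *
        ∏ i, r ((Fin.cons a x : Fin (n + 1) → Ω) i) ≤ σ 0 ![] a * r a := fun a => by
      calc ∑ x : Fin n → Ω, σ.prob (Fin.cons a x : Fin (n + 1) → Ω) *
            ∏ i, r ((Fin.cons a x : Fin (n + 1) → Ω) i)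
          = σ 0 ![] a * r a * ∑ x : Fin n → Ω, (σ.tail a).prob x * ∏ i, r (x i) := by
            rw [Finset.mul_sum]
            refine Finset.sum_congr rfl fun x _ => ?_
            rw [prob_cons, Fin.prod_univ_succ, Fin.cons_zero]
            simp only [Fin.cons_succ]
            ring
        _ ≤ σ 0 ![] a * r a * 1 :=
            mul_le_mul_of_nonneg_left (sum_prob_mul_prod_le_one hQ hr hbd n (hσ.tail a))
              (mul_nonneg (hQ _ (hσ 0 ![]) a) (hr a))
        _ = σ 0 ![] a * r a := mul_one _
    calc ∑ x : Fin (n + 1) → Ω, σ.prob x * ∏ i, r (x i)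
        = ∑ a, ∑ x : Fin n → Ω, σ.prob (Fin.cons a x : Fin (n + 1) → Ω) *
            ∏ i, r ((Fin.cons a x : Fin (n + 1) → Ω) i) := by
          rw [← (Fin.consEquiv fun _ => Ω).sum_comp, Fintype.sum_prod_type]
          rfl
      _ ≤ ∑ a, σ 0 ![] a * r a := Finset.sum_le_sum fun a _ => hfirst a
      _ ≤ 1 := hbd _ (hσ 0 ![])

lemma sum_prob_le_one [Fintype Ω] {Q : Set (Ω → ℝ)} (hQ : ∀ q ∈ Q, IsProbDist q)
    {σ : Strategy Ω} (hσ : σ.Valid Q) (n : ℕ) : ∑ x : Fin n → Ω, σ.prob x ≤ 1 := by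
  simpa using sum_prob_mul_prod_le_one (fun q hq => (hQ q hq).1) (r := 1) zero_le_one
    (fun q hq => by simp [(hQ q hq).2]) n hσ

end Strategy

lemma sum_le_exp_neg_of_le_log {ι : Type*} [Fintype ι] {μ f : ι → ℝ} (hμ : 0 ≤ μ)
    (hf : 0 ≤ f) (hμ_sum : ∑ i, μ i ≤ 1) (hμf_sum : ∑ i, μ i * f i ≤ 1) {c : ℝ}
    {A : Finset ι} (hA : ∀ i ∈ A, c ≤ Real.log (f i)) :
    ∑ i ∈ A, μ i ≤ Real.exp (-c) := by
  -- The case `c ≤ 0` is split off because the junk value `log 0 = 0` lets points with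
  -- `f i = 0` into `A`.
  rcases le_or_gt c 0 with hc | hc
  · calc ∑ i ∈ A, μ i ≤ ∑ i, μ i :=
          Finset.sum_le_sum_of_subset_of_nonneg A.subset_univ fun i _ _ => hμ i
      _ ≤ 1 := hμ_sum
      _ ≤ Real.exp (-c) := Real.one_le_exp (by linarith)
  · have hA' : ∀ i ∈ A, μ i ≤ Real.exp (-c) * (μ i * f i) := fun i hi => by
      have hfi : 0 < f i :=
        one_pos.trans ((Real.log_pos_iff (hf i)).1 (hc.trans_le (hA i hi)))
      have hexp : Real.exp c ≤ f i := (Real.le_log_iff_exp_le hfi).1 (hA i hi)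
      calc μ i = Real.exp (-c) * (μ i * Real.exp c) := by
            rw [mul_left_comm, ← Real.exp_add, neg_add_cancel, Real.exp_zero, mul_one]
        _ ≤ Real.exp (-c) * (μ i * f i) := by gcongr; exact hμ i
    calc ∑ i ∈ A, μ i ≤ Real.exp (-c) * ∑ i ∈ A, μ i * f i := by
          rw [Finset.mul_sum]; exact Finset.sum_le_sum hA'
      _ ≤ Real.exp (-c) * ∑ i, μ i * f i := by
          gcongr
          · exact fun i _ _ => mul_nonneg (hμ i) (hf i)
          · exact A.subset_univ
      _ ≤ Real.exp (-c) * 1 := by gcongr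
      _ = Real.exp (-c) := mul_one _

theorem accept_prob_le_exp_general {Ω : Type*} [Fintype Ω]
    (P Q : Set (Ω → ℝ))
    (hP : ∀ p ∈ P, IsProbDist p) (hQ : ∀ q ∈ Q, IsProbDist q)
    (hQconv : Convex ℝ Q)
    (pstar qstar : Ω → ℝ) (hpstar : pstar ∈ P) (hqstar : qstar ∈ Q)
    (hmin : ∀ p ∈ P, ∀ q ∈ Q, relEnt pstar qstar ≤ relEnt p q)
    (hfin : relEnt pstar qstar ≠ ⊤) :
    ∀ σ : Strategy Ω, σ.Valid Q → ∀ ε > (0 : ℝ), ∀ n : ℕ,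
      σ.setProb (acceptRegion pstar qstar n ε)
        ≤ Real.exp (-(n : ℝ) *
            ((∑ y, pstar y * Real.log (pstar y / qstar y)) - ε)) := by
  intro σ hσ ε _ n
  have hQnonneg : ∀ q ∈ Q, 0 ≤ q := fun q hq => (hQ q hq).1
  have hratio_nonneg : 0 ≤ fun y => pstar y / qstar y := fun y =>
    div_nonneg ((hP pstar hpstar).1 y) ((hQ qstar hqstar).1 y)
  have hratio_mean : ∀ q ∈ Q, ∑ y, q y * (pstar y / qstar y) ≤ 1 :=
    fun q => sum_mul_div_le_one_of_isMinOn_relEnt hQnonneg hQconv (hP pstar hpstar).2 hqstar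
      (relEnt_ne_top_iff.1 hfin) (isMinOn_iff.2 (hmin pstar hpstar))
  rw [neg_mul]
  exact sum_le_exp_neg_of_le_log (Strategy.prob_nonneg hQnonneg hσ)
    (fun x => Finset.prod_nonneg fun i _ => hratio_nonneg (x i)) (σ.sum_prob_le_one hQ hσ n)
    (σ.sum_prob_mul_prod_le_one hQnonneg hratio_nonneg hratio_mean n hσ)
    (fun x hx => (Finset.mem_filter.1 hx).2)

/-- If `(p*, q*)` minimizes `D(p‖q)` over `P × Q` with `0 < D(p*‖q*) < ∞`, then every
adaptive `Q`-strategy `q̂` satisfies `q̂(A_{n,ε}) ≤ exp(−n (D(p*‖q*) − ε))`. -/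
theorem accept_prob_le_exp {Ω : Type*} [Fintype Ω] [DecidableEq Ω]
    (P Q : Set (Ω → ℝ))
    (hP : ∀ p ∈ P, IsProbDist p) (hQ : ∀ q ∈ Q, IsProbDist q)
    (hPclosed : IsClosed P) (hQclosed : IsClosed Q)
    (hPconv : Convex ℝ P) (hQconv : Convex ℝ Q)
    (pstar qstar : Ω → ℝ) (hpstar : pstar ∈ P) (hqstar : qstar ∈ Q)
    (hmin : ∀ p ∈ P, ∀ q ∈ Q, relEnt pstar qstar ≤ relEnt p q)
    (hfin : relEnt pstar qstar ≠ ⊤)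
    (hpos : (0 : EReal) < relEnt pstar qstar) :
    ∀ σ : Strategy Ω, σ.Valid Q → ∀ ε > (0 : ℝ), ∀ n : ℕ,
      σ.setProb (acceptRegion pstar qstar n ε)
        ≤ Real.exp (-(n : ℝ) *
            ((∑ y, pstar y * Real.log (pstar y / qstar y)) - ε)) :=
  accept_prob_le_exp_general P Q hP hQ hQconv pstar qstar hpstar hqstar hmin hfin
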